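/- arXiv:2407.07109 — 4 statements merged into one kernel-verified Lean document; each statement's English description precedes it below -/
import Mathlib

section
/- Let θ_n be the acute angle of the n-th triangle of the Fibonacci–Theodorus spiral opposite the leg of length √F_n, so that sin θ_n = √(F_n / F_{n+2}), i.e., θ_n = arcsin(√(F_n / F_{n+2})). Then the limit of θ_n as n → ∞ equals arcsin(1/φ) (the arccosecant of φ). -/
open Real Filter

/-- The golden ratio φ = (1+√5)/2. -/
noncomputable def phi : ℝ := (1 + Real.sqrt 5) / 2

/-- The acute angle of the n-th triangle of the Fibonacci–Theodorus spiral
opposite the leg √(F n), i.e. θ n = arcsin (√(F n / F (n+2))). -/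
noncomputable def theta (n : ℕ) : ℝ :=
  Real.arcsin (Real.sqrt ((Nat.fib n : ℝ) / (Nat.fib (n + 2) : ℝ)))

/-!
Binet's formula gives `F (n+1) - φ F n = ψ ^ n` with `|ψ| < 1`, so `F (n+1) / F n → φ`.
Multiplying consecutive ratios, `F (n+2) / F n → φ ^ 2`; hence `F n / F (n+2) → φ⁻²`, whose
square root is `1 / φ`, and `arcsin ∘ sqrt` is continuous.
-/

open Topology goldenRatio

lemma abs_goldenConj_lt_one : |ψ| < 1 :=
  abs_lt.2 ⟨neg_one_lt_goldenConj, goldenConj_neg.trans one_pos⟩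

lemma natCast_fib_ne_zero {n : ℕ} (hn : 1 ≤ n) : (Nat.fib n : ℝ) ≠ 0 := by
  exact_mod_cast (Nat.fib_pos.2 hn).ne'

theorem tendsto_fib_succ_div_fib :
    Tendsto (fun n => (Nat.fib (n + 1) : ℝ) / Nat.fib n) atTop (𝓝 φ) := by
  have herror : Tendsto (fun n => ψ ^ n / Nat.fib n) atTop (𝓝 0) := by
    refine squeeze_zero_norm' ?_
      (tendsto_pow_atTop_nhds_zero_of_lt_one (abs_nonneg ψ) abs_goldenConj_lt_one)
    filter_upwards [eventually_ge_atTop 1] with n hn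
    have hfib : (1 : ℝ) ≤ Nat.fib n := by exact_mod_cast Nat.fib_pos.2 hn
    rw [norm_div, norm_pow, Real.norm_eq_abs, Real.norm_natCast]
    exact div_le_self (by positivity) hfib
  refine (add_zero φ ▸ herror.const_add φ).congr' ?_
  filter_upwards [eventually_ge_atTop 1] with n hn
  have := natCast_fib_ne_zero hn
  rw [← fib_succ_sub_goldenRatio_mul_fib]
  field_simp
  ring

theorem tendsto_fib_add_div_fib (k : ℕ) :
    Tendsto (fun n => (Nat.fib (n + k) : ℝ) / Nat.fib n) atTop (𝓝 (φ ^ k)) := by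
  induction k with
  | zero =>
    refine tendsto_const_nhds.congr' ?_
    filter_upwards [eventually_ge_atTop 1] with n hn
    simp [natCast_fib_ne_zero hn]
  | succ k ih =>
    have hstep := tendsto_fib_succ_div_fib.comp (tendsto_add_atTop_nat k)
    refine (pow_succ' φ k ▸ hstep.mul ih).congr' ?_
    filter_upwards [eventually_ge_atTop 1] with n hn
    simp only [Function.comp_apply, ← add_assoc]
    exact div_mul_div_cancel₀ (natCast_fib_ne_zero (by omega))

theorem angle_tendsto_arccsc_goldenRatio :
    Filter.Tendsto theta Filter.atTop (nhds (Real.arcsin (1 / phi))) := by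
  have hratio : Tendsto (fun n => (Nat.fib n : ℝ) / Nat.fib (n + 2)) atTop (𝓝 (φ ^ 2)⁻¹) := by
    simpa only [inv_div] using (tendsto_fib_add_div_fib 2).inv₀ (by positivity)
  have hlimit : arcsin (√(φ ^ 2)⁻¹) = arcsin (1 / phi) := by
    rw [sqrt_inv, sqrt_sq goldenRatio_pos.le, one_div]
    rfl
  rw [← hlimit]
  exact (continuous_arcsin.comp continuous_sqrt).continuousAt.tendsto.comp hratio
end

section
/- For every positive integer n, the inequality −1/√(5 φ^5) ≤ ∑_{k=1}^{n} (−1)^{k+1} φ^{((−1)^k − k)} / √(5φ) holds. -/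
open Real Finset

/-! Since `x - 1 = x⁻¹` for a root of `x² = x + 1`, the terms `k = 2j - 1` and `k = 2j` pair up to
`x⁻²ʲ - x¹⁻²ʲ = -x⁻²ʲ⁻¹`, and the full series `-∑ⱼ x⁻²ʲ⁻¹` sums to `-x⁻²`. Concretely, the partial
sums are `-x⁻²` plus a positive remainder (`x⁻ⁿ⁻²` or `2x⁻ⁿ⁻¹` according to the parity of `n`).
For `x = φ`, dividing by `√(5φ)` and using `√(5φ⁵) = φ²√(5φ)` gives the bound. -/

section GoldenPowers

variable {x : ℝ}

theorem sum_Icc_alternating_zpow_eq (hx : x ^ 2 = x + 1) (n : ℕ) :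
    ∑ k ∈ Icc 1 n, (-1 : ℝ) ^ (k + 1) * x ^ ((-1 : ℤ) ^ k - k) =
      -x ^ (-2 : ℤ) + if Even n then x ^ (-(n : ℤ) - 2) else 2 * x ^ (-(n : ℤ) - 1) := by
  have hx0 : x ≠ 0 := by rintro rfl; norm_num at hx
  induction n with
  | zero => simp
  | succ n ih =>
    rw [sum_Icc_succ_top (by omega), ih]
    rcases Nat.even_or_odd n with hn | hn
    · rw [if_pos hn, if_neg (Nat.not_even_iff_odd.mpr hn.add_one)]
      simp only [pow_succ (-1 : ℝ) (n + 1), hn.add_one.neg_one_pow]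
      push_cast
      ring_nf
    · rw [if_neg (Nat.not_even_iff_odd.mpr hn), if_pos hn.add_one]
      simp only [pow_succ (-1 : ℝ) (n + 1), hn.add_one.neg_one_pow]
      push_cast
      have e1 : -(n : ℤ) - 1 = (-n - 3) + 2 := by ring
      have e2 : 1 - ((n : ℤ) + 1) = (-n - 3) + 3 := by ring
      have e3 : -((n : ℤ) + 1) - 2 = -n - 3 := by ring
      rw [e1, e2, e3, zpow_add₀ hx0, zpow_add₀ hx0]
      simp only [zpow_ofNat]
      -- `x³ - 2x² + 1 = (x - 1)(x² - x - 1)`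
      linear_combination (-(x - 1) * x ^ (-(n : ℤ) - 3)) * hx

theorem neg_zpow_two_le_sum_Icc_alternating_zpow (hx_pos : 0 < x) (hx : x ^ 2 = x + 1) (n : ℕ) :
    -x ^ (-2 : ℤ) ≤ ∑ k ∈ Icc 1 n, (-1 : ℝ) ^ (k + 1) * x ^ ((-1 : ℤ) ^ k - k) := by
  rw [sum_Icc_alternating_zpow_eq hx]
  refine le_add_of_nonneg_right ?_
  split_ifs <;> positivity

end GoldenPowers

theorem neg_le_sum_alternating_powers :
    ∀ n : ℕ, 0 < n →
      -1 / Real.sqrt (5 * phi ^ 5) ≤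
        ∑ k ∈ Finset.Icc 1 n,
          (-1 : ℝ) ^ (k + 1) * phi ^ ((-1 : ℝ) ^ k - (k : ℝ)) / Real.sqrt (5 * phi) := by
  intro n _
  have hphi : 0 < phi := goldenRatio_pos
  have hrpow (k : ℕ) : phi ^ ((-1 : ℝ) ^ k - (k : ℝ)) = phi ^ ((-1 : ℤ) ^ k - k) := by
    rw [← rpow_intCast]; push_cast; rfl
  have hsqrt : √(5 * phi ^ 5) = √(5 * phi) * phi ^ 2 := by
    rw [show 5 * phi ^ 5 = 5 * phi * (phi ^ 2) ^ 2 by ring, sqrt_mul (by positivity),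
      sqrt_sq (by positivity)]
  calc -1 / √(5 * phi ^ 5) = -phi ^ (-2 : ℤ) / √(5 * phi) := by
        rw [hsqrt, zpow_neg, zpow_ofNat]; field_simp
    _ ≤ (∑ k ∈ Icc 1 n, (-1 : ℝ) ^ (k + 1) * phi ^ ((-1 : ℤ) ^ k - k)) / √(5 * phi) :=
        div_le_div_of_nonneg_right
          (neg_zpow_two_le_sum_Icc_alternating_zpow hphi goldenRatio_sq n) (sqrt_nonneg _)
    _ = _ := by simp only [sum_div, hrpow]
end

section
/- Let A_i = √(F_i · F_{i+1}) / 2. Then for every positive integer n, | ∑_{i=1}^{n} A_i − (√φ / 2)(F_{n+2} − 1) | ≤ 1/4. -/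
open Real Finset

/-- Area of the n-th triangle of the Fibonacci–Theodorus spiral,
`A n = √(F n · F (n+1)) / 2`. -/
noncomputable def A (n : ℕ) : ℝ := Real.sqrt (Nat.fib n * Nat.fib (n + 1)) / 2

/-!
Write `2 A_i = √φ F_i + e_i`. Since `∑_{i ≤ n} F_i = F_{n+2} - 1`, the claim is
`|∑_{i ≤ n} e_i| ≤ 1/2`. Multiplying `e_i = √(F_i F_{i+1}) - √φ F_i` by its conjugate `D_i` gives
`e_i D_i = F_i (F_{i+1} - φ F_i) = F_i ψ^i`, so `e_i = (-1)^i F_i / (φ^i D_i)`: the defects alternate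
in sign. Their absolute values decrease (comparing squares, this comes down to
`F_{i+1}² ≤ 2 F_i F_{i+2} ≤ φ² F_i F_{i+2}`), so the partial sums lie between `e_1` and `0`, and
`|e_1| = 1 / (φ (1 + √φ)) ≤ 1/2`.
-/

open scoped goldenRatio
open Nat (fib)

theorem Finset.sum_Icc_one_eq_sum_range {M : Type*} [AddCommMonoid M] (f : ℕ → M) (n : ℕ) :
    ∑ i ∈ Icc 1 n, f i = ∑ k ∈ range n, f (k + 1) := by
  rw [← Ico_add_one_right_eq_Icc, sum_Ico_eq_sum_range]
  simp only [Nat.add_sub_cancel, add_comm 1]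

theorem Antitone.sum_range_neg_one_pow_mul_mem_Icc {R : Type*} [Ring R] [PartialOrder R]
    [IsOrderedRing R] {a : ℕ → R} (ha : Antitone a) (h0 : ∀ i, 0 ≤ a i) (n : ℕ) :
    ∑ i ∈ range n, (-1) ^ i * a i ∈ Set.Icc 0 (a 0) := by
  induction n generalizing a with
  | zero => simpa using h0 0
  | succ n ih =>
    obtain ⟨hlo, hhi⟩ := ih (ha.comp_monotone (add_left_mono (a := 1))) (fun i ↦ h0 _)
    have hsplit : ∑ i ∈ range (n + 1), (-1) ^ i * a i
        = a 0 - ∑ i ∈ range n, (-1) ^ i * a (i + 1) := by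
      simp [sum_range_succ', pow_succ, sub_eq_neg_add]
    rw [hsplit]
    exact ⟨sub_nonneg.2 (hhi.trans (ha (Nat.zero_le 1))), sub_le_self _ hlo⟩

theorem sum_Icc_fib (n : ℕ) : ∑ i ∈ Icc 1 n, (fib i : ℝ) = fib (n + 2) - 1 := by
  rw [Nat.fib_succ_eq_succ_sum (n + 1), sum_Icc_one_eq_sum_range, sum_range_succ' _ n]
  push_cast
  simp

theorem fib_succ_sq_le_two_mul {n : ℕ} (hn : 0 < n) : fib (n + 1) ^ 2 ≤ 2 * fib n * fib (n + 2) := by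
  have h1 : fib (n + 1) ≤ 2 * fib n := by
    obtain ⟨m, rfl⟩ := Nat.exists_eq_add_one_of_ne_zero hn.ne'
    rw [Nat.fib_add_two]; linarith [Nat.fib_le_fib_succ (n := m)]
  have h2 : fib (n + 1) ≤ fib (n + 2) := Nat.fib_le_fib_succ
  calc fib (n + 1) ^ 2 = fib (n + 1) * fib (n + 1) := sq _
    _ ≤ 2 * fib n * fib (n + 2) := Nat.mul_le_mul h1 h2

noncomputable def areaDefect (i : ℕ) : ℝ := √(fib i * fib (i + 1)) - √φ * fib i

noncomputable def areaDefectConj (i : ℕ) : ℝ := √(fib i * fib (i + 1)) + √φ * fib i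

theorem areaDefect_mul_areaDefectConj (i : ℕ) :
    areaDefect i * areaDefectConj i = fib i * ψ ^ i := by
  have hprod : √(fib i * fib (i + 1) : ℝ) ^ 2 = fib i * fib (i + 1) := sq_sqrt (by positivity)
  have hphi : √φ ^ 2 = φ := sq_sqrt goldenRatio_pos.le
  rw [← fib_succ_sub_goldenRatio_mul_fib]
  unfold areaDefect areaDefectConj
  linear_combination hprod - (fib i : ℝ) ^ 2 * hphi

theorem areaDefectConj_pos {i : ℕ} (hi : 0 < i) : 0 < areaDefectConj i := by
  have : (0 : ℝ) < fib i := by exact_mod_cast Nat.fib_pos.2 hi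
  unfold areaDefectConj
  positivity

noncomputable def areaDefectAbs (i : ℕ) : ℝ := fib i / (φ ^ i * areaDefectConj i)

theorem areaDefectAbs_nonneg (i : ℕ) : 0 ≤ areaDefectAbs i := by
  unfold areaDefectAbs areaDefectConj
  positivity

theorem areaDefect_eq_neg_one_pow_mul (i : ℕ) : areaDefect i = (-1) ^ i * areaDefectAbs i := by
  rcases Nat.eq_zero_or_pos i with rfl | hi
  · simp [areaDefect, areaDefectAbs]
  have hψ : ψ ^ i = (-1) ^ i / φ ^ i := by
    rw [← neg_neg ψ, ← inv_goldenRatio, neg_pow, inv_pow, div_eq_mul_inv]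
  rw [eq_div_of_mul_eq (areaDefectConj_pos hi).ne' (areaDefect_mul_areaDefectConj i), hψ,
    areaDefectAbs]
  field_simp

theorem fib_succ_mul_areaDefectConj_le {i : ℕ} (hi : 0 < i) :
    fib (i + 1) * areaDefectConj i ≤ φ * fib i * areaDefectConj (i + 1) := by
  have hφ : (2 : ℝ) ≤ φ ^ 2 := by rw [goldenRatio_sq]; linarith [one_lt_goldenRatio]
  have hsq : (fib (i + 1) : ℝ) ^ 2 ≤ φ ^ 2 * (fib i * fib (i + 2)) := by
    have h : (fib (i + 1) : ℝ) ^ 2 ≤ 2 * fib i * fib (i + 2) := by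
      exact_mod_cast fib_succ_sq_le_two_mul hi
    nlinarith
  have hfirst :
      fib (i + 1) * √(fib i * fib (i + 1)) ≤ φ * fib i * √(fib (i + 1) * fib (i + 2)) := by
    calc (fib (i + 1) : ℝ) * √(fib i * fib (i + 1))
        = √((fib (i + 1) : ℝ) ^ 2 * (fib i * fib (i + 1))) := by
          rw [sqrt_mul (sq_nonneg _), sqrt_sq (Nat.cast_nonneg _)]
      _ ≤ √((φ * fib i) ^ 2 * (fib (i + 1) * fib (i + 2))) := sqrt_le_sqrt <| calc
          (fib (i + 1) : ℝ) ^ 2 * (fib i * fib (i + 1))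
            = fib i * fib (i + 1) * fib (i + 1) ^ 2 := by ring
          _ ≤ fib i * fib (i + 1) * (φ ^ 2 * (fib i * fib (i + 2))) := by gcongr
          _ = (φ * fib i) ^ 2 * (fib (i + 1) * fib (i + 2)) := by ring
      _ = φ * fib i * √(fib (i + 1) * fib (i + 2)) := by
          rw [sqrt_mul (sq_nonneg _), sqrt_sq (by positivity)]
  have hsecond : fib (i + 1) * (√φ * fib i) ≤ φ * fib i * (√φ * fib (i + 1)) := by
    have : (0 : ℝ) ≤ √φ * fib i * fib (i + 1) := by positivity
    nlinarith [one_lt_goldenRatio]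
  unfold areaDefectConj
  linarith

theorem areaDefectAbs_succ_le {i : ℕ} (hi : 0 < i) : areaDefectAbs (i + 1) ≤ areaDefectAbs i := by
  have hD := areaDefectConj_pos hi
  have hD' := areaDefectConj_pos i.succ_pos
  unfold areaDefectAbs
  rw [div_le_div_iff₀ (by positivity) (by positivity)]
  calc (fib (i + 1) : ℝ) * (φ ^ i * areaDefectConj i)
      = φ ^ i * (fib (i + 1) * areaDefectConj i) := by ring
    _ ≤ φ ^ i * (φ * fib i * areaDefectConj (i + 1)) :=
      mul_le_mul_of_nonneg_left (fib_succ_mul_areaDefectConj_le hi) (by positivity)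
    _ = fib i * (φ ^ (i + 1) * areaDefectConj (i + 1)) := by ring

theorem abs_sum_areaDefect_le (n : ℕ) : |∑ i ∈ Icc 1 n, areaDefect i| ≤ areaDefectAbs 1 := by
  have hanti : Antitone fun k ↦ areaDefectAbs (k + 1) :=
    antitone_nat_of_succ_le fun k ↦ areaDefectAbs_succ_le k.succ_pos
  obtain ⟨hlo, hhi⟩ := hanti.sum_range_neg_one_pow_mul_mem_Icc (fun k ↦ areaDefectAbs_nonneg _) n
  have hsum : ∑ i ∈ Icc 1 n, areaDefect i = -∑ k ∈ range n, (-1) ^ k * areaDefectAbs (k + 1) := by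
    simp [sum_Icc_one_eq_sum_range, areaDefect_eq_neg_one_pow_mul, pow_succ]
  rw [hsum, abs_neg, abs_of_nonneg hlo]
  exact hhi

theorem areaDefectAbs_one_le : areaDefectAbs 1 ≤ 1 / 2 := by
  have h1 : 1 ≤ √φ := one_le_sqrt.2 one_lt_goldenRatio.le
  have h2 : 2 ≤ φ * (1 + √φ) := by nlinarith [one_lt_goldenRatio]
  simp only [areaDefectAbs, areaDefectConj, Nat.reduceAdd, Nat.fib_one, Nat.fib_two,
    Nat.cast_one, mul_one, sqrt_one, pow_one]
  rw [div_le_div_iff₀ (by positivity) two_pos]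
  linarith

theorem sum_areas_approx_fib :
    ∀ n : ℕ, 0 < n →
      |∑ i ∈ Finset.Icc 1 n, A i - Real.sqrt phi / 2 * ((Nat.fib (n + 2) : ℝ) - 1)| ≤ 1 / 4 := by
  intro n _
  have hA : ∀ i, A i = (√φ * fib i + areaDefect i) / 2 := fun i ↦ by
    rw [A, areaDefect]; ring
  have hphi : phi = φ := rfl
  rw [sum_congr rfl fun i _ ↦ hA i, ← sum_div, sum_add_distrib, ← mul_sum, sum_Icc_fib, hphi]
  have hdiff : (√φ * ((fib (n + 2) : ℝ) - 1) + ∑ i ∈ Icc 1 n, areaDefect i) / 2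
      - √φ / 2 * ((fib (n + 2) : ℝ) - 1) = (∑ i ∈ Icc 1 n, areaDefect i) / 2 := by ring
  rw [hdiff, abs_div, abs_two]
  linarith [abs_sum_areaDefect_le n, areaDefectAbs_one_le]
end

section
/- Let Hn(n) = (1/2) ∑_{i=0}^{F_n − 1} √(F_{n+1} + i) denote the n-th Hahn area of the Theodorus spiral (the total area of the F_n consecutive triangles of the Theodorus spiral whose longer legs have lengths √F_{n+1}, √(F_{n+1}+1), …, √(F_{n+2}−1)). Then the limit as n → ∞ of Hn(n) / Hn(n−1) equals φ√φ = φ^{3/2}, where φ = (1+√5)/2. (This proves Hahn's conjecture.) -/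
open Real Filter Finset

/-- The n-th Hahn area of the Theodorus spiral:
`Hn n = (1/2) ∑_{i=0}^{F n - 1} √(F (n+1) + i)`. -/
noncomputable def Hn (n : ℕ) : ℝ :=
  (1 / 2) * ∑ i ∈ Finset.range (Nat.fib n), Real.sqrt ((Nat.fib (n + 1) : ℝ) + (i : ℝ))

/-!
Compare `∑_{i<m} √(a + i)` with `∫_a^{a+m} √t dt = (2/3)((a + m)^{3/2} - a^{3/2})`, writing
`x^{3/2}` as `x * √x`. As `√` is increasing, `√x ≤ ∫_x^{x+1} √t dt ≤ √(x + 1)`, so the sum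
differs from the integral by at most `√(a + m)`, which is negligible against `a^{3/2}`.
For `a = F_{n+1}` and `m = F_n` we have `a + m = F_{n+2}` and `F_{n+2}/F_{n+1} → φ`, hence
`Hn n / F_{n+1}^{3/2} → (1/3)(φ^{3/2} - 1) ≠ 0`, and the ratio of consecutive Hahn areas has
the same limit as `(F_{n+2}/F_{n+1})^{3/2}`, namely `φ^{3/2}`.
-/

open scoped Topology

lemma mul_sqrt_div_mul_sqrt {x : ℝ} (hx : 0 ≤ x) (y : ℝ) :
    x * √x / (y * √y) = x / y * √(x / y) := by
  rw [Real.sqrt_div hx, mul_div_mul_comm]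

lemma sqrt_le_two_thirds_mul_sub {x : ℝ} (hx : 0 ≤ x) :
    √x ≤ 2 / 3 * ((x + 1) * √(x + 1) - x * √x) := by
  have hu := Real.sq_sqrt hx
  have hv := Real.sq_sqrt (by linarith : 0 ≤ x + 1)
  have huv : √x ≤ √(x + 1) := Real.sqrt_le_sqrt (by linarith)
  nlinarith [Real.sqrt_nonneg x, mul_nonneg (sub_nonneg.2 huv) (sub_nonneg.2 huv),
    mul_nonneg (mul_nonneg (sub_nonneg.2 huv) (sub_nonneg.2 huv)) (Real.sqrt_nonneg (x + 1))]

lemma two_thirds_mul_sub_le_sqrt {x : ℝ} (hx : 0 ≤ x) :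
    2 / 3 * ((x + 1) * √(x + 1) - x * √x) ≤ √(x + 1) := by
  have hu := Real.sq_sqrt hx
  have hv := Real.sq_sqrt (by linarith : 0 ≤ x + 1)
  have huv : √x ≤ √(x + 1) := Real.sqrt_le_sqrt (by linarith)
  nlinarith [Real.sqrt_nonneg x, mul_nonneg (sub_nonneg.2 huv) (sub_nonneg.2 huv),
    mul_nonneg (mul_nonneg (sub_nonneg.2 huv) (sub_nonneg.2 huv)) (Real.sqrt_nonneg x)]

lemma two_thirds_mul_sub_eq_sum_range (a : ℝ) (m : ℕ) :
    2 / 3 * ((a + m) * √(a + m) - a * √a) =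
      ∑ i ∈ range m, 2 / 3 * ((a + i + 1) * √(a + i + 1) - (a + i) * √(a + i)) := by
  have h := sum_range_sub (fun i : ℕ => (a + i) * √(a + i)) m
  push_cast [← add_assoc] at h
  rw [← mul_sum, h, add_zero]

lemma sum_range_sqrt_add_le {a : ℝ} (ha : 0 ≤ a) (m : ℕ) :
    ∑ i ∈ range m, √(a + i) ≤ 2 / 3 * ((a + m) * √(a + m) - a * √a) := by
  rw [two_thirds_mul_sub_eq_sum_range]
  exact sum_le_sum fun i _ => sqrt_le_two_thirds_mul_sub (by positivity)

lemma le_sum_range_sqrt_add {a : ℝ} (ha : 0 ≤ a) (m : ℕ) :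
    2 / 3 * ((a + m) * √(a + m) - a * √a) - √(a + m) ≤ ∑ i ∈ range m, √(a + i) := by
  have hshift : ∑ i ∈ range m, √(a + i + 1) = ∑ i ∈ range m, √(a + i) + √(a + m) - √a := by
    rw [← sum_range_succ, sum_range_succ']
    push_cast
    simp [add_assoc]
  have h := sum_le_sum fun i (_ : i ∈ range m) =>
    two_thirds_mul_sub_le_sqrt (x := a + i) (by positivity)
  rw [← two_thirds_mul_sub_eq_sum_range, hshift] at h
  linarith [Real.sqrt_nonneg a]

lemma two_thirds_mul_sub_div_eq {a : ℝ} (ha : 0 < a) (m : ℕ) :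
    2 / 3 * ((a + m) * √(a + m) - a * √a) / (a * √a) =
      2 / 3 * ((a + m) / a * √((a + m) / a) - 1) := by
  have : a * √a ≠ 0 := by positivity
  rw [← mul_sqrt_div_mul_sqrt (by positivity), mul_div_assoc, sub_div, div_self this]

lemma sqrt_add_div_mul_sqrt {a : ℝ} (ha : 0 < a) (m : ℕ) :
    √(a + m) / (a * √a) = √((a + m) / a) * a⁻¹ := by
  rw [Real.sqrt_div (by positivity)]
  field_simp

theorem tendsto_sum_range_sqrt_add_div {a : ℕ → ℝ} {m : ℕ → ℕ} {r : ℝ}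
    (ha : Tendsto a atTop atTop) (hr : Tendsto (fun n => (a n + m n) / a n) atTop (𝓝 r)) :
    Tendsto (fun n => (∑ i ∈ range (m n), √(a n + i)) / (a n * √(a n))) atTop
      (𝓝 (2 / 3 * (r * √r - 1))) := by
  have hmain : Tendsto (fun n => 2 / 3 * ((a n + m n) / a n * √((a n + m n) / a n) - 1))
      atTop (𝓝 (2 / 3 * (r * √r - 1))) :=
    ((hr.mul hr.sqrt).sub_const 1).const_mul _
  have herr : Tendsto (fun n => √((a n + m n) / a n) * (a n)⁻¹) atTop (𝓝 0) := by
    simpa using hr.sqrt.mul ha.inv_tendsto_atTop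
  have hpos : ∀ᶠ n in atTop, 0 < a n := ha.eventually_gt_atTop 0
  refine tendsto_of_tendsto_of_tendsto_of_le_of_le' (by simpa using hmain.sub herr) hmain ?_ ?_
  · filter_upwards [hpos] with n hn
    rw [← two_thirds_mul_sub_div_eq hn, ← sqrt_add_div_mul_sqrt hn, ← sub_div]
    exact div_le_div_of_nonneg_right (le_sum_range_sqrt_add hn.le _) (by positivity)
  · filter_upwards [hpos] with n hn
    rw [← two_thirds_mul_sub_div_eq hn]
    exact div_le_div_of_nonneg_right (sum_range_sqrt_add_le hn.le _) (by positivity)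

theorem tendsto_succ_div_of_tendsto_div {u v : ℕ → ℝ} {c q : ℝ}
    (huv : Tendsto (fun n => u n / v n) atTop (𝓝 c)) (hc : c ≠ 0)
    (hv : Tendsto (fun n => v (n + 1) / v n) atTop (𝓝 q)) (hv0 : ∀ n, v n ≠ 0) :
    Tendsto (fun n => u (n + 1) / u n) atTop (𝓝 q) := by
  have h := ((huv.comp (tendsto_add_atTop_nat 1)).div huv hc).mul hv
  rw [div_self hc, one_mul] at h
  refine h.congr fun n => ?_
  have := hv0 n
  have := hv0 (n + 1)
  rcases eq_or_ne (u n) 0 with hu | hu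
  · simp [hu]
  · simp only [Pi.div_apply, Function.comp_apply]
    field_simp

lemma tendsto_fib_succ_atTop : Tendsto (fun n => (Nat.fib (n + 1) : ℝ)) atTop atTop :=
  tendsto_natCast_atTop_atTop.comp <|
    (tendsto_add_atTop_iff_nat 1).mp Nat.fib_add_two_strictMono.tendsto_atTop

lemma tendsto_fib_add_two_div_fib_succ :
    Tendsto (fun n => (Nat.fib (n + 2) / Nat.fib (n + 1) : ℝ)) atTop (𝓝 goldenRatio) :=
  tendsto_fib_succ_div_fib_atTop.comp (tendsto_add_atTop_nat 1)

lemma one_lt_goldenRatio_mul_sqrt : 1 < goldenRatio * √goldenRatio := by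
  have h : 1 < √goldenRatio := Real.lt_sqrt_of_sq_lt (by nlinarith [one_lt_goldenRatio])
  nlinarith [one_lt_goldenRatio]

/-- Hahn's conjecture: the ratio of consecutive Hahn areas tends to φ√φ = φ^(3/2). -/
theorem hahn_conjecture :
    Filter.Tendsto (fun n : ℕ => Hn (n + 1) / Hn n) Filter.atTop
      (nhds (phi * Real.sqrt phi)) := by
  have hfib : ∀ n, (Nat.fib (n + 1) + Nat.fib n : ℝ) = Nat.fib (n + 2) := fun n => by
    rw [Nat.fib_add_two, Nat.cast_add, add_comm]
  have hsum := tendsto_sum_range_sqrt_add_div (m := Nat.fib) tendsto_fib_succ_atTop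
    (by simpa only [hfib] using tendsto_fib_add_two_div_fib_succ)
  refine tendsto_succ_div_of_tendsto_div (v := fun n => Nat.fib (n + 1) * √(Nat.fib (n + 1)))
    (by simpa only [Hn, mul_div_assoc] using hsum.const_mul (1 / 2)) ?_ ?_ fun n => ?_
  · have := one_lt_goldenRatio_mul_sqrt
    positivity
  · exact (tendsto_fib_add_two_div_fib_succ.mul tendsto_fib_add_two_div_fib_succ.sqrt).congr
      fun n => (mul_sqrt_div_mul_sqrt (Nat.cast_nonneg _) _).symm
  · have : 0 < Nat.fib (n + 1) := Nat.fib_pos.2 n.succ_pos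
    positivity
end
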